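/- arXiv:1612.07910 — 4 statements merged into one kernel-verified Lean document; each statement's English description precedes it below -/
import Mathlib

section
/- Let η : m → g and μ : n → g be crossed modules of Leibniz algebras. Then the subspace m □ n of the non-abelian tensor product m ⋆ n generated by all elements m * n' − n * m' with η(m) = μ(n) and η(m') = μ(n') is contained in the center of m ⋆ n; in particular, it is a two-sided ideal of m ⋆ n. -/
universe u v w

/-- The Leibniz identity for a bilinear bracket. -/
def LeibnizId {K : Type u} [Field K] {L : Type*} [AddCommGroup L] [Module K L]
    (b : L →ₗ[K] L →ₗ[K] L) : Prop :=
  ∀ x y z : L, b x (b y z) = b (b x y) z - b (b x z) y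

/-- A linear map preserving the brackets. -/
def IsLeibnizHom {K : Type u} [Field K] {L M : Type*} [AddCommGroup L] [Module K L]
    [AddCommGroup M] [Module K M]
    (bL : L →ₗ[K] L →ₗ[K] L) (bM : M →ₗ[K] M →ₗ[K] M) (f : L →ₗ[K] M) : Prop :=
  ∀ x y : L, f (bL x y) = bM (f x) (f y)

/-- A two-sided ideal of a Leibniz algebra. -/
def IsLeibnizIdeal {K : Type u} [Field K] {L : Type*} [AddCommGroup L] [Module K L]
    (b : L →ₗ[K] L →ₗ[K] L) (S : Submodule K L) : Prop :=
  ∀ a ∈ S, ∀ x : L, b a x ∈ S ∧ b x a ∈ S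

/-- A Leibniz action of a Leibniz algebra `M` on a Leibniz algebra `N`: a pair of
bilinear maps `l : M × N → N`, `(m,n) ↦ ᵐn` and `r : N × M → N`, `(n,m) ↦ nᵐ`
satisfying the six axioms. -/
def IsLeibnizAction {K : Type u} [Field K] {M N : Type*}
    [AddCommGroup M] [Module K M] [AddCommGroup N] [Module K N]
    (bM : M →ₗ[K] M →ₗ[K] M) (bN : N →ₗ[K] N →ₗ[K] N)
    (l : M →ₗ[K] N →ₗ[K] N) (r : N →ₗ[K] M →ₗ[K] N) : Prop :=
  (∀ (m m' : M) (n : N), l (bM m m') n = l m (l m' n) + r (l m n) m') ∧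
  (∀ (m : M) (n n' : N), l m (bN n n') = bN (l m n) n' - bN (l m n') n) ∧
  (∀ (n : N) (m m' : M), r n (bM m m') = r (r n m) m' - r (r n m') m) ∧
  (∀ (n n' : N) (m : M), r (bN n n') m = bN (r n m) n' + bN n (r n' m)) ∧
  (∀ (m m' : M) (n : N), l m (l m' n) = - l m (r n m')) ∧
  (∀ (n : N) (m : M) (n' : N), bN n (l m n') = - bN n (r n' m))

/-- A Leibniz crossed module: a Leibniz homomorphism `η : M → G` together with a Leibniz
action of `G` on `M` satisfying the crossed module axioms. -/
def IsCrossedModule {K : Type u} [Field K] {M G : Type*}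
    [AddCommGroup M] [Module K M] [AddCommGroup G] [Module K G]
    (bM : M →ₗ[K] M →ₗ[K] M) (bG : G →ₗ[K] G →ₗ[K] G)
    (η : M →ₗ[K] G) (l : G →ₗ[K] M →ₗ[K] M) (r : M →ₗ[K] G →ₗ[K] M) : Prop :=
  IsLeibnizHom bM bG η ∧ IsLeibnizAction bG bM l r ∧
  (∀ (x : G) (m : M), η (l x m) = bG x (η m)) ∧
  (∀ (m : M) (x : G), η (r m x) = bG (η m) x) ∧
  (∀ m₁ m₂ : M, l (η m₁) m₂ = bM m₁ m₂) ∧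
  (∀ m₁ m₂ : M, r m₁ (η m₂) = bM m₁ m₂)

/-- The defining relations (3a)–(5d) of the non-abelian tensor product `M ⋆ N` of two
Leibniz algebras acting on one another, for a candidate pair of bilinear maps
`p : M × N → T` (`(m,n) ↦ m*n`) and `q : N × M → T` (`(n,m) ↦ n*m`) into a Leibniz
algebra `(T, bT)`.  Here `lact m n = ᵐn`, `ract n m = nᵐ`, `lact' n m = ⁿm`,
`ract' m n = mⁿ`. -/
def TensorRel {K : Type u} [Field K] {M N T : Type*}
    [AddCommGroup M] [Module K M] [AddCommGroup N] [Module K N]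
    [AddCommGroup T] [Module K T]
    (bM : M →ₗ[K] M →ₗ[K] M) (bN : N →ₗ[K] N →ₗ[K] N)
    (lact : M →ₗ[K] N →ₗ[K] N) (ract : N →ₗ[K] M →ₗ[K] N)
    (lact' : N →ₗ[K] M →ₗ[K] M) (ract' : M →ₗ[K] N →ₗ[K] M)
    (bT : T →ₗ[K] T →ₗ[K] T)
    (p : M →ₗ[K] N →ₗ[K] T) (q : N →ₗ[K] M →ₗ[K] T) : Prop :=
  (∀ (m : M) (n n' : N), p m (bN n n') = p (ract' m n) n' - p (ract' m n') n) ∧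
  (∀ (n : N) (m m' : M), q n (bM m m') = q (ract n m) m' - q (ract n m') m) ∧
  (∀ (m m' : M) (n : N), p (bM m m') n = q (lact m n) m' - p m (ract n m')) ∧
  (∀ (n n' : N) (m : M), q (bN n n') m = p (lact' n m) n' - q n (ract' m n')) ∧
  (∀ (m m' : M) (n : N), p m (lact m' n) = - p m (ract n m')) ∧
  (∀ (n n' : N) (m : M), q n (lact' n' m) = - q n (ract' m n')) ∧
  (∀ (m : M) (n : N) (m' : M) (n' : N),
      bT (p m n) (p m' n') = p (ract' m n) (lact m' n') ∧
      bT (p m n) (p m' n') = q (lact m n) (ract' m' n')) ∧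
  (∀ (n : N) (m : M) (n' : N) (m' : M),
      bT (q n m) (q n' m') = p (lact' n m) (ract n' m') ∧
      bT (q n m) (q n' m') = q (ract n m) (lact' n' m')) ∧
  (∀ (m : M) (n : N) (n' : N) (m' : M),
      bT (p m n) (q n' m') = p (ract' m n) (ract n' m') ∧
      bT (p m n) (q n' m') = q (lact m n) (lact' n' m')) ∧
  (∀ (n : N) (m : M) (m' : M) (n' : N),
      bT (q n m) (p m' n') = p (lact' n m) (lact m' n') ∧
      bT (q n m) (p m' n') = q (ract n m) (ract' m' n'))

/-- `T` is generated (as a vector space) by the elements `m*n` and `n*m`. -/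
def TensorGen {K : Type u} [Field K] {M N T : Type*}
    [AddCommGroup M] [Module K M] [AddCommGroup N] [Module K N]
    [AddCommGroup T] [Module K T]
    (p : M →ₗ[K] N →ₗ[K] T) (q : N →ₗ[K] M →ₗ[K] T) : Prop :=
  Submodule.span K
    (Set.range (fun z : M × N => p z.1 z.2) ∪ Set.range (fun z : N × M => q z.1 z.2)) = ⊤

/-- `(T, bT, p, q)` is a realization of the quotient of the non-abelian tensor product
`M ⋆ N` by the additional relations `p z.1.1 z.1.2 = q z.2.1 z.2.2` for `z ∈ Sq`:
it is a Leibniz algebra satisfying all the relations, is generated by the canonical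
generators, and is universal among all such.  Taking `Sq = ∅` gives the non-abelian
tensor product itself; a suitable choice of `Sq` gives the non-abelian exterior
product `M ⋏ N`. -/
def IsExtProd.{w₀} {K : Type u} [Field K] {M N : Type*}
    [AddCommGroup M] [Module K M] [AddCommGroup N] [Module K N]
    {T : Type*} [AddCommGroup T] [Module K T]
    (bM : M →ₗ[K] M →ₗ[K] M) (bN : N →ₗ[K] N →ₗ[K] N)
    (lact : M →ₗ[K] N →ₗ[K] N) (ract : N →ₗ[K] M →ₗ[K] N)
    (lact' : N →ₗ[K] M →ₗ[K] M) (ract' : M →ₗ[K] N →ₗ[K] M)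
    (Sq : Set ((M × N) × (N × M)))
    (bT : T →ₗ[K] T →ₗ[K] T)
    (p : M →ₗ[K] N →ₗ[K] T) (q : N →ₗ[K] M →ₗ[K] T) : Prop :=
  LeibnizId bT ∧ TensorRel bM bN lact ract lact' ract' bT p q ∧
  (∀ z ∈ Sq, p z.1.1 z.1.2 = q z.2.1 z.2.2) ∧
  TensorGen p q ∧
  ∀ (T' : Type w₀) [AddCommGroup T'] [Module K T']
    (bT' : T' →ₗ[K] T' →ₗ[K] T')
    (p' : M →ₗ[K] N →ₗ[K] T') (q' : N →ₗ[K] M →ₗ[K] T'),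
    LeibnizId bT' → TensorRel bM bN lact ract lact' ract' bT' p' q' →
    (∀ z ∈ Sq, p' z.1.1 z.1.2 = q' z.2.1 z.2.2) →
    ∃ φ : T →ₗ[K] T', IsLeibnizHom bT bT' φ ∧
      (∀ (m : M) (n : N), φ (p m n) = p' m n) ∧ (∀ (n : N) (m : M), φ (q n m) = q' n m)

/-- Realization of the non-abelian tensor product `M ⋆ N`. -/
def IsTensorProd.{w'} {K : Type u} [Field K] {M N : Type*}
    [AddCommGroup M] [Module K M] [AddCommGroup N] [Module K N]
    {T : Type*} [AddCommGroup T] [Module K T]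
    (bM : M →ₗ[K] M →ₗ[K] M) (bN : N →ₗ[K] N →ₗ[K] N)
    (lact : M →ₗ[K] N →ₗ[K] N) (ract : N →ₗ[K] M →ₗ[K] N)
    (lact' : N →ₗ[K] M →ₗ[K] M) (ract' : M →ₗ[K] N →ₗ[K] M)
    (bT : T →ₗ[K] T →ₗ[K] T)
    (p : M →ₗ[K] N →ₗ[K] T) (q : N →ₗ[K] M →ₗ[K] T) : Prop :=
  IsExtProd.{u, w'} bM bN lact ract lact' ract' ∅ bT p q

/-! In `M ⋆ N` the bracket of a generator with `m*n` or `n*m` only sees `m` and `n` through the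
actions `ᵐn`, `nᵐ` (on the right) or `mⁿ`, `ⁿm` (on the left).  When `η m = μ n` and
`η m' = μ n'`, the crossed module axioms give `ᵐn' = [n, n'] = nᵐ'` and `mⁿ' = [m, m'] = ⁿm'`,
so `m*n'` and `n*m'` have the same brackets with every generator, hence with everything. -/

section Center

variable {K : Type u} [Field K] {L : Type*} [AddCommGroup L] [Module K L]

def leibnizCenter (b : L →ₗ[K] L →ₗ[K] L) : Submodule K L :=
  ⨅ x : L, LinearMap.ker (b x) ⊓ LinearMap.ker (b.flip x)

theorem mem_leibnizCenter {b : L →ₗ[K] L →ₗ[K] L} {c : L} :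
    c ∈ leibnizCenter b ↔ ∀ x, b x c = 0 ∧ b c x = 0 := by
  simp [leibnizCenter]

theorem isLeibnizIdeal_of_le_leibnizCenter {b : L →ₗ[K] L →ₗ[K] L} {S : Submodule K L}
    (hS : S ≤ leibnizCenter b) : IsLeibnizIdeal b S := by
  intro a ha x
  obtain ⟨hxa, hax⟩ := mem_leibnizCenter.mp (hS ha) x
  rw [hxa, hax]
  exact ⟨S.zero_mem, S.zero_mem⟩

end Center

section TensorRel

variable {K : Type u} [Field K] {M N T : Type*}
    [AddCommGroup M] [Module K M] [AddCommGroup N] [Module K N]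
    [AddCommGroup T] [Module K T]
    {bM : M →ₗ[K] M →ₗ[K] M} {bN : N →ₗ[K] N →ₗ[K] N}
    {lact : M →ₗ[K] N →ₗ[K] N} {ract : N →ₗ[K] M →ₗ[K] N}
    {lact' : N →ₗ[K] M →ₗ[K] M} {ract' : M →ₗ[K] N →ₗ[K] M}
    {bT : T →ₗ[K] T →ₗ[K] T} {p : M →ₗ[K] N →ₗ[K] T} {q : N →ₗ[K] M →ₗ[K] T}

theorem TensorRel.bracket_left_eq (hRel : TensorRel bM bN lact ract lact' ract' bT p q)
    (hGen : TensorGen p q) {m m' : M} {n n' : N} (hact : lact m n' = ract n m') (t : T) :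
    bT t (p m n') = bT t (q n m') := by
  obtain ⟨-, -, -, -, -, -, hpp, hqq, hpq, hqp⟩ := hRel
  suffices bT.flip (p m n') = bT.flip (q n m') from LinearMap.congr_fun this t
  refine LinearMap.ext_on hGen ?_
  rintro x (⟨⟨a, b⟩, rfl⟩ | ⟨⟨b, a⟩, rfl⟩)
  · simp only [LinearMap.flip_apply, (hpp a b m n').1, (hpq a b n m').1, hact]
  · simp only [LinearMap.flip_apply, (hqp b a m n').1, (hqq b a n m').1, hact]

theorem TensorRel.bracket_right_eq (hRel : TensorRel bM bN lact ract lact' ract' bT p q)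
    (hGen : TensorGen p q) {m m' : M} {n n' : N} (hact : ract' m n' = lact' n m') (t : T) :
    bT (p m n') t = bT (q n m') t := by
  obtain ⟨-, -, -, -, -, -, hpp, hqq, hpq, hqp⟩ := hRel
  suffices bT (p m n') = bT (q n m') from LinearMap.congr_fun this t
  refine LinearMap.ext_on hGen ?_
  rintro x (⟨⟨a, b⟩, rfl⟩ | ⟨⟨b, a⟩, rfl⟩)
  · simp only [(hpp m n' a b).1, (hqp n m' a b).1, hact]
  · simp only [(hpq m n' b a).1, (hqq n m' b a).1, hact]

theorem TensorRel.sub_mem_leibnizCenter (hRel : TensorRel bM bN lact ract lact' ract' bT p q)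
    (hGen : TensorGen p q) {m m' : M} {n n' : N} (hl : lact m n' = ract n m')
    (hr : ract' m n' = lact' n m') : p m n' - q n m' ∈ leibnizCenter bT :=
  mem_leibnizCenter.mpr fun t => by
    rw [map_sub, LinearMap.map_sub₂, hRel.bracket_left_eq hGen hl t,
      hRel.bracket_right_eq hGen hr t, sub_self, sub_self]
    exact ⟨rfl, rfl⟩

end TensorRel

section CrossedModule

variable {K : Type u} [Field K] {M G : Type*}
    [AddCommGroup M] [Module K M] [AddCommGroup G] [Module K G]
    {bM : M →ₗ[K] M →ₗ[K] M} {bG : G →ₗ[K] G →ₗ[K] G}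
    {η : M →ₗ[K] G} {l : G →ₗ[K] M →ₗ[K] M} {r : M →ₗ[K] G →ₗ[K] M}

theorem IsCrossedModule.left_act_map (h : IsCrossedModule bM bG η l r) (m₁ m₂ : M) :
    l (η m₁) m₂ = bM m₁ m₂ :=
  h.2.2.2.2.1 m₁ m₂

theorem IsCrossedModule.right_act_map (h : IsCrossedModule bM bG η l r) (m₁ m₂ : M) :
    r m₁ (η m₂) = bM m₁ m₂ :=
  h.2.2.2.2.2 m₁ m₂

end CrossedModule

theorem square_sub_center_of_tensor_general {K : Type u} [Field K]
    {G M N T : Type*} [AddCommGroup G] [Module K G] [AddCommGroup M] [Module K M]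
    [AddCommGroup N] [Module K N] [AddCommGroup T] [Module K T]
    (bG : G →ₗ[K] G →ₗ[K] G) (bM : M →ₗ[K] M →ₗ[K] M) (bN : N →ₗ[K] N →ₗ[K] N)
    (η : M →ₗ[K] G) (μ : N →ₗ[K] G)
    (lM : G →ₗ[K] M →ₗ[K] M) (rM : M →ₗ[K] G →ₗ[K] M)
    (lN : G →ₗ[K] N →ₗ[K] N) (rN : N →ₗ[K] G →ₗ[K] N)
    (hM : IsCrossedModule bM bG η lM rM) (hN : IsCrossedModule bN bG μ lN rN)
    (bT : T →ₗ[K] T →ₗ[K] T) (p : M →ₗ[K] N →ₗ[K] T) (q : N →ₗ[K] M →ₗ[K] T)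
    (hT : IsTensorProd bM bN
      (lN ∘ₗ η) ((rN.flip ∘ₗ η).flip) (lM ∘ₗ μ) ((rM.flip ∘ₗ μ).flip) bT p q) :
    (∀ (m m' : M) (n n' : N), η m = μ n → η m' = μ n' →
      ∀ t : T, bT t (p m n' - q n m') = 0 ∧ bT (p m n' - q n m') t = 0) ∧
    IsLeibnizIdeal bT (Submodule.span K
      {z : T | ∃ (m m' : M) (n n' : N), η m = μ n ∧ η m' = μ n' ∧ z = p m n' - q n m'}) := by
  obtain ⟨-, hRel, -, hGen, -⟩ := hT
  have central : ∀ (m m' : M) (n n' : N), η m = μ n → η m' = μ n' →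
      p m n' - q n m' ∈ leibnizCenter bT := by
    intro m m' n n' h h'
    refine hRel.sub_mem_leibnizCenter hGen ?_ ?_
    · change lN (η m) n' = rN n (η m')
      rw [h, h', hN.left_act_map, hN.right_act_map]
    · change rM m (μ n') = lM (μ n) m'
      rw [← h, ← h', hM.left_act_map, hM.right_act_map]
  refine ⟨fun m m' n n' h h' => mem_leibnizCenter.mp (central m m' n n' h h'), ?_⟩
  refine isLeibnizIdeal_of_le_leibnizCenter (Submodule.span_le.mpr ?_)
  rintro z ⟨m, m', n, n', h, h', rfl⟩
  exact central m m' n n' h h'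

/-- Let `η : M → G` and `μ : N → G` be Leibniz crossed modules, with the induced mutual
actions of `M` and `N` on each other via `G`, and let `T = M ⋆ N` be the non-abelian
tensor product.  Then the subspace `M □ N` generated by the elements `m*n' - n*m'` with
`η m = μ n` and `η m' = μ n'` is contained in the center of `M ⋆ N`; in particular it is
a two-sided ideal of `M ⋆ N`. -/
theorem square_sub_center_of_tensor {K : Type u} [Field K]
    {G M N T : Type*} [AddCommGroup G] [Module K G] [AddCommGroup M] [Module K M]
    [AddCommGroup N] [Module K N] [AddCommGroup T] [Module K T]
    (bG : G →ₗ[K] G →ₗ[K] G) (bM : M →ₗ[K] M →ₗ[K] M) (bN : N →ₗ[K] N →ₗ[K] N)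
    (hbG : LeibnizId bG) (hbM : LeibnizId bM) (hbN : LeibnizId bN)
    (η : M →ₗ[K] G) (μ : N →ₗ[K] G)
    (lM : G →ₗ[K] M →ₗ[K] M) (rM : M →ₗ[K] G →ₗ[K] M)
    (lN : G →ₗ[K] N →ₗ[K] N) (rN : N →ₗ[K] G →ₗ[K] N)
    (hM : IsCrossedModule bM bG η lM rM) (hN : IsCrossedModule bN bG μ lN rN)
    (bT : T →ₗ[K] T →ₗ[K] T) (p : M →ₗ[K] N →ₗ[K] T) (q : N →ₗ[K] M →ₗ[K] T)
    (hT : IsTensorProd bM bN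
      (lN ∘ₗ η) ((rN.flip ∘ₗ η).flip) (lM ∘ₗ μ) ((rM.flip ∘ₗ μ).flip) bT p q) :
    (∀ (m m' : M) (n n' : N), η m = μ n → η m' = μ n' →
      ∀ t : T, bT t (p m n' - q n m') = 0 ∧ bT (p m n' - q n m') t = 0) ∧
    IsLeibnizIdeal bT (Submodule.span K
      {z : T | ∃ (m m' : M) (n n' : N), η m = μ n ∧ η m' = μ n' ∧ z = p m n' - q n m'}) :=
  square_sub_center_of_tensor_general bG bM bN η μ lM rM lN rN hM hN bT p q hT
end

section
/- For a Leibniz algebra g, the vector space g • g = coker(d : g⊗g⊗g → g⊗g) carries a Leibniz algebra structure with bracket [x•y, x'•y'] = [x,y] • [x',y']. -/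
/-! The bracket `[x,y]` descends along `x ⊗ y ↦ [x,y]` to a map `π : g • g → g`, because
`d (x ⊗ y ⊗ z)` is sent to `[[x,y],z] - [[x,z],y] - [x,[y,z]] = 0`. Put `B p q = π p • π q`;
then `π (B p q) = [π p, π q]`, and the Leibniz identity for `B` is the relation
`x • [y,z] = [x,y] • z - [x,z] • y` holding in the cokernel of `d`. -/

universe u v w

section

open TensorProduct

variable {K : Type*} [Field K] {L Q : Type*} [AddCommGroup L] [Module K L]
  [AddCommGroup Q] [Module K Q]

theorem leibnizId_compl₂_comp {b : L →ₗ[K] L →ₗ[K] L} {C : L →ₗ[K] L →ₗ[K] Q}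
    {π : Q →ₗ[K] L} (hπ : ∀ x y, π (C x y) = b x y)
    (hC : ∀ x y z, C x (b y z) = C (b x y) z - C (b x z) y) :
    LeibnizId ((C.comp π).compl₂ π) := by
  intro p q r
  simp only [LinearMap.compl₂_apply, LinearMap.comp_apply, hπ]
  exact hC _ _ _

variable {b : L →ₗ[K] L →ₗ[K] L} {d3 : (L ⊗[K] L) ⊗[K] L →ₗ[K] L ⊗[K] L}

theorem range_le_ker_lift_of_leibnizId (hb : LeibnizId b)
    (hd3 : ∀ x y z : L,
      d3 ((x ⊗ₜ[K] y) ⊗ₜ[K] z) = (b x y) ⊗ₜ[K] z - (b x z) ⊗ₜ[K] y - x ⊗ₜ[K] (b y z)) :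
    LinearMap.range d3 ≤ LinearMap.ker (lift b) := by
  rw [LinearMap.range_le_ker_iff]
  refine TensorProduct.ext_threefold fun x y z => ?_
  simp only [LinearMap.comp_apply, hd3, map_sub, lift.tmul, hb x y z, LinearMap.zero_apply]
  abel

theorem mkQ_tmul_bracket
    (hd3 : ∀ x y z : L,
      d3 ((x ⊗ₜ[K] y) ⊗ₜ[K] z) = (b x y) ⊗ₜ[K] z - (b x z) ⊗ₜ[K] y - x ⊗ₜ[K] (b y z))
    (x y z : L) :
    (LinearMap.range d3).mkQ (x ⊗ₜ[K] b y z) =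
      (LinearMap.range d3).mkQ (b x y ⊗ₜ[K] z) - (LinearMap.range d3).mkQ (b x z ⊗ₜ[K] y) := by
  have hd : (LinearMap.range d3).mkQ (d3 ((x ⊗ₜ[K] y) ⊗ₜ[K] z)) = 0 :=
    (Submodule.Quotient.mk_eq_zero _).2 (LinearMap.mem_range_self _ _)
  rw [hd3, map_sub, map_sub, sub_eq_zero] at hd
  exact hd.symm

end

open TensorProduct in
/-- For a Leibniz algebra `g`, the vector space `g • g = coker(d₃ : g⊗g⊗g → g⊗g)`
carries a Leibniz algebra structure with bracket `[x•y, x'•y'] = [x,y] • [x',y']`. -/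
theorem bullet_leibniz_structure {K : Type u} [Field K] {L : Type v}
    [AddCommGroup L] [Module K L] (b : L →ₗ[K] L →ₗ[K] L) (hb : LeibnizId b)
    (d3 : (L ⊗[K] L) ⊗[K] L →ₗ[K] L ⊗[K] L)
    (hd3 : ∀ x y z : L,
      d3 ((x ⊗ₜ[K] y) ⊗ₜ[K] z) = (b x y) ⊗ₜ[K] z - (b x z) ⊗ₜ[K] y - x ⊗ₜ[K] (b y z)) :
    ∃ B : ((L ⊗[K] L) ⧸ LinearMap.range d3) →ₗ[K]
          ((L ⊗[K] L) ⧸ LinearMap.range d3) →ₗ[K] ((L ⊗[K] L) ⧸ LinearMap.range d3),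
      (∀ x y x' y' : L,
        B (Submodule.Quotient.mk (x ⊗ₜ[K] y)) (Submodule.Quotient.mk (x' ⊗ₜ[K] y')) =
          Submodule.Quotient.mk ((b x y) ⊗ₜ[K] (b x' y'))) ∧
      LeibnizId B := by
  set R := LinearMap.range d3
  let π : (L ⊗[K] L) ⧸ R →ₗ[K] L := R.liftQ (lift b) (range_le_ker_lift_of_leibnizId hb hd3)
  let C : L →ₗ[K] L →ₗ[K] (L ⊗[K] L) ⧸ R := (TensorProduct.mk K L L).compr₂ R.mkQ
  have hπ : ∀ x y, π (C x y) = b x y := fun x y => by simp [π, C]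
  exact ⟨(C.comp π).compl₂ π, fun x y x' y' => rfl,
    leibnizId_compl₂_comp hπ (mkQ_tmul_bracket hd3)⟩
end

section
/- Let η : m → g and μ : n → g be Leibniz crossed modules, and let m ×_g n = {(m,n) | η(m) = μ(n)} be their pullback. Then ⟨m,n⟩ = {(τ_m(x), τ_n(x)) | x ∈ m ⋆ n} is a two-sided ideal of m ×_g n, and the quotient (m ×_g n)/⟨m,n⟩ is abelian. -/
universe u v w

/-- Let `η : M → G` and `μ : N → G` be Leibniz crossed modules, `M ×_G N` their pullback
(a Leibniz subalgebra of `M ⊕ N`), and `⟨M,N⟩ = {(τ_M x, τ_N x) | x ∈ M ⋆ N}`.  Then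
`⟨M,N⟩` is a two-sided ideal of `M ×_G N` and the quotient `(M ×_G N)/⟨M,N⟩` is
abelian. -/
theorem pullback_ideal_abelian_quotient {K : Type u} [Field K]
    {G M N T : Type*} [AddCommGroup G] [Module K G] [AddCommGroup M] [Module K M]
    [AddCommGroup N] [Module K N] [AddCommGroup T] [Module K T]
    (bG : G →ₗ[K] G →ₗ[K] G) (bM : M →ₗ[K] M →ₗ[K] M) (bN : N →ₗ[K] N →ₗ[K] N)
    (hbG : LeibnizId bG) (hbM : LeibnizId bM) (hbN : LeibnizId bN)
    (η : M →ₗ[K] G) (μ : N →ₗ[K] G)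
    (lM : G →ₗ[K] M →ₗ[K] M) (rM : M →ₗ[K] G →ₗ[K] M)
    (lN : G →ₗ[K] N →ₗ[K] N) (rN : N →ₗ[K] G →ₗ[K] N)
    (hM : IsCrossedModule bM bG η lM rM) (hN : IsCrossedModule bN bG μ lN rN)
    (bT : T →ₗ[K] T →ₗ[K] T) (p : M →ₗ[K] N →ₗ[K] T) (q : N →ₗ[K] M →ₗ[K] T)
    (hT : IsTensorProd bM bN
      (lN ∘ₗ η) ((rN.flip ∘ₗ η).flip) (lM ∘ₗ μ) ((rM.flip ∘ₗ μ).flip) bT p q)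
    (τM : T →ₗ[K] M) (τN : T →ₗ[K] N)
    (hτM : IsLeibnizHom bT bM τM) (hτN : IsLeibnizHom bT bN τN)
    (hτMp : ∀ (m : M) (n : N), τM (p m n) = rM m (μ n))
    (hτMq : ∀ (n : N) (m : M), τM (q n m) = lM (μ n) m)
    (hτNp : ∀ (m : M) (n : N), τN (p m n) = lN (η m) n)
    (hτNq : ∀ (n : N) (m : M), τN (q n m) = rN n (η m))
    (bMN : (M × N) →ₗ[K] (M × N) →ₗ[K] M × N)
    (hbMN : ∀ z w : M × N, bMN z w = (bM z.1 w.1, bN z.2 w.2))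
    (P : Submodule K (M × N))
    (hP : P = LinearMap.ker (η ∘ₗ LinearMap.fst K M N - μ ∘ₗ LinearMap.snd K M N))
    (S : Submodule K (M × N)) (hS : S = LinearMap.range (τM.prod τN)) :
    S ≤ P ∧
    (∀ s ∈ S, ∀ t ∈ P, bMN s t ∈ S ∧ bMN t s ∈ S) ∧
    (∀ t ∈ P, ∀ t' ∈ P, bMN t t' ∈ S) := by
  obtain ⟨hMhom, hMact, hM1, hM2, hM3, hM4⟩ := hM
  obtain ⟨hNhom, hNact, hN1, hN2, hN3, hN4⟩ := hN
  obtain ⟨hTleib, hTrel, hTsq, hTgen, hTuniv⟩ := hT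
  have key : ∀ x : T, η (τM x) = μ (τN x) := by
    intro x
    have hx : x ∈ Submodule.span K
        (Set.range (fun z : M × N => p z.1 z.2) ∪
         Set.range (fun z : N × M => q z.1 z.2)) := by
      rw [hTgen]; trivial
    induction hx using Submodule.span_induction with
    | mem y hy =>
      rcases hy with ⟨z, rfl⟩ | ⟨z, rfl⟩
      · rw [hτMp, hτNp, hM2, hN1]
      · rw [hτMq, hτNq, hM1, hN2]
    | zero => simp
    | add a b _ _ ha hb => simp [ha, hb]
    | smul c a _ ha => simp [ha]
  have memP : ∀ t : M × N, t ∈ P ↔ η t.1 = μ t.2 := by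
    intro t
    rw [hP, LinearMap.mem_ker]
    simp [sub_eq_zero]
  refine ⟨?_, ?_, ?_⟩
  · rintro z hz
    rw [hS] at hz
    obtain ⟨x, rfl⟩ := hz
    rw [memP]
    exact key x
  · intro s hs t ht
    rw [hS] at hs
    obtain ⟨x, rfl⟩ := hs
    rw [memP] at ht
    rw [hS]
    constructor
    · refine ⟨p (τM x) t.2, ?_⟩
      rw [hbMN]
      have h1 : τM (p (τM x) t.2) = bM (τM x) t.1 := by
        rw [hτMp, ← ht, hM4]
      have h2 : τN (p (τM x) t.2) = bN (τN x) t.2 := by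
        rw [hτNp, key x, hN3]
      simp only [LinearMap.prod_apply, Function.prod, h1, h2]
    · refine ⟨q t.2 (τM x), ?_⟩
      rw [hbMN]
      have h1 : τM (q t.2 (τM x)) = bM t.1 (τM x) := by
        rw [hτMq, ← ht, hM3]
      have h2 : τN (q t.2 (τM x)) = bN t.2 (τN x) := by
        rw [hτNq, key x, hN4]
      simp only [LinearMap.prod_apply, Function.prod, h1, h2]
  · intro t ht t' ht'
    rw [memP] at ht ht'
    rw [hS]
    refine ⟨p t.1 t'.2, ?_⟩
    rw [hbMN]
    have h1 : τM (p t.1 t'.2) = bM t.1 t'.1 := by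
      rw [hτMp, ← ht', hM4]
    have h2 : τN (p t.1 t'.2) = bN t.2 t'.2 := by
      rw [hτNp, ht, hN3]
    simp only [LinearMap.prod_apply, Function.prod, h1, h2]
end

section
/- Let R be a commutative ring and A a free R-module with basis {e_i}_{i∈I}, where I is well-ordered. Then Whitehead's universal quadratic functor Γ(A) is a free R-module with basis {γ(e_i)}_{i∈I} ∪ {γ(e_i + e_j) − γ(e_i) − γ(e_j)}_{i<j}. -/
universe u v

variable (R : Type u) [CommRing R] (A : Type v) [AddCommGroup A] [Module R A]

/-- The defining relations of Whitehead's universal quadratic functor `Γ(A)`, as elements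
of the free `R`-module on the symbols `γ(a) = Finsupp.single a 1`, `a ∈ A`. -/
def gammaRels : Set (A →₀ R) :=
  {f | ∃ (k : R) (a : A), f = k ^ 2 • Finsupp.single a (1 : R) - Finsupp.single (k • a) 1} ∪
  {f | ∃ a b c : A, f =
      Finsupp.single (a + b + c) (1 : R) + Finsupp.single a 1 + Finsupp.single b 1 +
        Finsupp.single c 1 - Finsupp.single (a + b) 1 - Finsupp.single (a + c) 1 -
        Finsupp.single (b + c) 1} ∪
  {f | ∃ (k : R) (a b : A), f =
      Finsupp.single (k • a + b) (1 : R) + k • Finsupp.single a (1 : R) +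
        k • Finsupp.single b (1 : R) - k • Finsupp.single (a + b) (1 : R) -
        Finsupp.single (k • a) 1 - Finsupp.single b 1}

/-- Whitehead's universal quadratic functor `Γ(A)`: the `R`-module generated by the
symbols `γ(a)`, `a ∈ A`, subject to the quadratic relations. -/
def Gamma : Type max u v :=
  (A →₀ R) ⧸ Submodule.span R (gammaRels R A)

noncomputable instance : AddCommGroup (Gamma R A) :=
  inferInstanceAs (AddCommGroup ((A →₀ R) ⧸ Submodule.span R (gammaRels R A)))

noncomputable instance : Module R (Gamma R A) :=
  inferInstanceAs (Module R ((A →₀ R) ⧸ Submodule.span R (gammaRels R A)))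

/-- The canonical generator `γ(a) ∈ Γ(A)`. -/
noncomputable def gammaGen (a : A) : Gamma R A :=
  Submodule.Quotient.mk (Finsupp.single a 1)

namespace GammaAux

open Finsupp

variable {R A}
variable {I : Type*} [LinearOrder I]

abbrev B (I : Type*) [LT I] : Type _ := I ⊕ {z : I × I // z.1 < z.2}

def Qfun (f : I →₀ R) : B I → R
  | Sum.inl i => f i ^ 2
  | Sum.inr z => f z.1.1 * f z.1.2

noncomputable def QF (f : I →₀ R) : B I →₀ R :=
  Finsupp.onFinset
    (f.support.image Sum.inl ∪
      ((f.support ×ˢ f.support).subtype (fun z : I × I => z.1 < z.2)).image Sum.inr)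
    (Qfun f)
    (by
      intro b hb
      rcases b with i | z
      · refine Finset.mem_union_left _ (Finset.mem_image.2 ⟨i, ?_, rfl⟩)
        rw [Finsupp.mem_support_iff]
        intro h; exact hb (by simp [Qfun, h])
      · refine Finset.mem_union_right _ (Finset.mem_image.2 ⟨z, ?_, rfl⟩)
        rw [Finset.mem_subtype]
        have h1 : f z.1.1 ≠ 0 := fun h => hb (by simp [Qfun, h])
        have h2 : f z.1.2 ≠ 0 := fun h => hb (by simp [Qfun, h])
        exact Finset.mem_product.2 ⟨Finsupp.mem_support_iff.2 h1, Finsupp.mem_support_iff.2 h2⟩)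

@[simp] lemma QF_apply (f : I →₀ R) (b : B I) : QF f b = Qfun f b := rfl

@[simp] lemma Qfun_inl (f : I →₀ R) (i : I) : Qfun f (Sum.inl i) = f i ^ 2 := rfl
@[simp] lemma Qfun_inr (f : I →₀ R) (z : {z : I × I // z.1 < z.2}) :
    Qfun f (Sum.inr z) = f z.1.1 * f z.1.2 := rfl

@[simp] lemma QF_zero : QF (0 : I →₀ R) = 0 := by
  ext b; rcases b with i | z <;> simp [Qfun]




noncomputable def phi (e : Module.Basis I R A) : (A →₀ R) →ₗ[R] (B I →₀ R) :=
  Finsupp.lsum R fun a => LinearMap.toSpanSingleton R _ (QF (e.repr a))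

@[simp] lemma phi_single (e : Module.Basis I R A) (a : A) (r : R) :
    phi e (Finsupp.single a r) = r • QF (e.repr a) := by
  simp [phi, LinearMap.toSpanSingleton_apply]

lemma phi_rels (e : Module.Basis I R A) :
    Submodule.span R (gammaRels R A) ≤ LinearMap.ker (phi e) := by
  rw [Submodule.span_le]
  intro f hf
  simp only [SetLike.mem_coe, LinearMap.mem_ker]
  rcases hf with (⟨k, a, rfl⟩ | ⟨a, b, c, rfl⟩) | ⟨k, a, b, rfl⟩
  · ext bb
    rcases bb with i | z <;>
      simp [Qfun, map_smul, smul_eq_mul] <;> ring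
  · ext bb
    rcases bb with i | z <;>
      simp [Qfun, map_add, smul_eq_mul] <;> ring
  · ext bb
    rcases bb with i | z <;>
      simp [Qfun, map_add, map_smul, smul_eq_mul] <;> ring

noncomputable def vB (e : Module.Basis I R A) : B I → Gamma R A
  | Sum.inl i => gammaGen R A (e i)
  | Sum.inr z => gammaGen R A (e z.1.1 + e z.1.2) - gammaGen R A (e z.1.1) -
      gammaGen R A (e z.1.2)

noncomputable def psi (e : Module.Basis I R A) : (B I →₀ R) →ₗ[R] Gamma R A :=
  Finsupp.lsum R fun b => LinearMap.toSpanSingleton R _ (vB e b)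

@[simp] lemma psi_single (e : Module.Basis I R A) (b : B I) (r : R) :
    psi e (Finsupp.single b r) = r • vB e b := by
  simp [psi, LinearMap.toSpanSingleton_apply]

lemma mk_rel {f : A →₀ R} (hf : f ∈ gammaRels R A) :
    (Submodule.Quotient.mk f : Gamma R A) = 0 :=
  (Submodule.Quotient.mk_eq_zero _).2 (Submodule.subset_span hf)

lemma gammaGen_def (a : A) :
    gammaGen R A a = (Submodule.Quotient.mk (Finsupp.single a 1) : Gamma R A) := rfl

lemma gamma_smul_gen (k : R) (a : A) :
    k • gammaGen R A a = (Submodule.Quotient.mk (k • Finsupp.single a 1) : Gamma R A) := rfl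

lemma hG1 (k : R) (a : A) : k ^ 2 • gammaGen R A a = gammaGen R A (k • a) := by
  have h := mk_rel (R := R) (A := A) (Or.inl (Or.inl ⟨k, a, rfl⟩))
  rw [Submodule.Quotient.mk_sub, Submodule.Quotient.mk_smul, sub_eq_zero] at h
  exact h

lemma hG2 (a b c : A) :
    gammaGen R A (a + b + c) + gammaGen R A a + gammaGen R A b + gammaGen R A c =
      gammaGen R A (a + b) + gammaGen R A (a + c) + gammaGen R A (b + c) := by
  have h := mk_rel (R := R) (A := A) (Or.inl (Or.inr ⟨a, b, c, rfl⟩))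
  simp only [Submodule.Quotient.mk_sub, Submodule.Quotient.mk_add] at h
  simp only [gammaGen_def]
  linear_combination (norm := abel) h

lemma hG3 (k : R) (a b : A) :
    gammaGen R A (k • a + b) + k • gammaGen R A a + k • gammaGen R A b =
      k • gammaGen R A (a + b) + gammaGen R A (k • a) + gammaGen R A b := by
  have h := mk_rel (R := R) (A := A) (Or.inr ⟨k, a, b, rfl⟩)
  simp only [Submodule.Quotient.mk_sub, Submodule.Quotient.mk_add] at h
  rw [gamma_smul_gen, gamma_smul_gen, gamma_smul_gen]
  simp only [gammaGen_def]
  linear_combination (norm := abel) h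

@[simp] lemma gammaGen_zero : gammaGen R A 0 = 0 := by
  have h := hG1 (R := R) (A := A) 0 0
  simpa using h.symm

noncomputable def bA (a b : A) : Gamma R A :=
  gammaGen R A (a + b) - gammaGen R A a - gammaGen R A b

lemma bA_symm (a b : A) : bA (R := R) a b = bA b a := by
  simp only [bA, add_comm a b]; abel

lemma gamma_add (a b : A) :
    gammaGen R A (a + b) = gammaGen R A a + gammaGen R A b + bA a b := by
  simp only [bA]; abel

lemma bA_add_left (a b c : A) : bA (R := R) (a + b) c = bA a c + bA b c := by
  have h := hG2 (R := R) (A := A) a b c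
  simp only [bA]
  linear_combination (norm := abel) h

lemma bA_smul_left (k : R) (a b : A) : bA (R := R) (k • a) b = k • bA a b := by
  have h := hG3 (R := R) (A := A) k a b
  simp only [bA, smul_sub]
  linear_combination (norm := abel) h

lemma bA_add_right (a b c : A) : bA (R := R) a (b + c) = bA a b + bA a c := by
  rw [bA_symm, bA_add_left, bA_symm, bA_symm c a]

lemma bA_smul_right (k : R) (a b : A) : bA (R := R) a (k • b) = k • bA a b := by
  rw [bA_symm, bA_smul_left, bA_symm]

noncomputable def bAlin (a : A) : A →ₗ[R] Gamma R A where
  toFun := bA a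
  map_add' := bA_add_right a
  map_smul' k b := bA_smul_right k a b

@[simp] lemma bAlin_apply (a b : A) : bAlin (R := R) a b = bA a b := rfl

noncomputable def dd (i j : I) : B I →₀ R :=
  if h : i < j then Finsupp.single (Sum.inr ⟨(i, j), h⟩) 1
  else if h' : j < i then Finsupp.single (Sum.inr ⟨(j, i), h'⟩) 1
  else 0

@[simp] lemma dd_apply_inl (i j k : I) : dd (R := R) i j (Sum.inl k) = 0 := by
  rw [dd]
  split_ifs <;> simp [Finsupp.single_apply]

lemma dd_apply_inr (i j k l : I) (hkl : k < l) :
    dd (R := R) i j (Sum.inr ⟨(k, l), hkl⟩) =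
      (if i = k ∧ j = l then 1 else 0) + (if j = k ∧ i = l then 1 else 0) := by
  classical
  by_cases hP : i = k ∧ j = l
  · obtain ⟨rfl, rfl⟩ := hP
    have hQ : ¬(j = i ∧ i = j) := fun ⟨h1, _⟩ => absurd (h1 ▸ hkl) (lt_irrefl _)
    rw [if_pos ⟨rfl, rfl⟩, if_neg hQ, dd, dif_pos hkl]
    simp [Finsupp.single_apply]
  · by_cases hQ : j = k ∧ i = l
    · obtain ⟨rfl, rfl⟩ := hQ
      rw [if_neg hP, dd, dif_neg (asymm hkl), dif_pos hkl, if_pos ⟨rfl, rfl⟩]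
      simp [Finsupp.single_apply]
    · rw [if_neg hP, if_neg hQ, dd]
      split_ifs with h1 h2
      · simp only [Finsupp.single_apply, Sum.inr.injEq, Subtype.mk.injEq, Prod.mk.injEq]
        rw [if_neg hP]; simp
      · simp only [Finsupp.single_apply, Sum.inr.injEq, Subtype.mk.injEq, Prod.mk.injEq]
        rw [if_neg hQ]; simp
      · simp

lemma psi_dd (e : Module.Basis I R A) {i j : I} (hij : i ≠ j) :
    psi e (dd i j) = bA (e i) (e j) := by
  rcases lt_or_gt_of_ne hij with h | h
  · rw [dd, dif_pos h, psi_single, one_smul]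
    rfl
  · rw [dd, dif_neg (asymm h), dif_pos h, psi_single, one_smul]
    exact (bA_symm _ _)

lemma sum_proj [DecidableEq I] (h : I →₀ R) (j₀ : I) (c : R) :
    (h.sum fun j y => if j = j₀ then c * y else 0) = c * h j₀ := by
  rw [Finsupp.sum_ite_eq' h j₀ (fun _ y => c * y)]
  by_cases hj : j₀ ∈ h.support
  · simp [hj]
  · simp [hj, Finsupp.notMem_support_iff.mp hj]

lemma QF_step (i : I) (x : R) (h : I →₀ R) (hi : h i = 0) :
    QF (Finsupp.single i x + h) =
      QF h + x ^ 2 • Finsupp.single (Sum.inl i) 1 +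
        x • h.sum fun j y => y • dd i j := by
  classical
  ext b
  rcases b with k | z
  · have hsum : (h.sum fun j y => y • dd (R := R) i j) (Sum.inl k) = 0 := by
      rw [Finsupp.sum_apply, Finsupp.sum]
      exact Finset.sum_eq_zero fun j _ => by simp
    simp only [Finsupp.add_apply, Finsupp.smul_apply, QF_apply, Qfun_inl, hsum,
      smul_eq_mul, mul_zero, add_zero, Finsupp.single_apply]
    rcases eq_or_ne i k with rfl | hik
    · simp [hi]
    · simp [hik]
  · obtain ⟨⟨k, l⟩, hkl⟩ := z
    have hsum : (h.sum fun j y => y • dd (R := R) i j) (Sum.inr ⟨(k, l), hkl⟩) =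
        (if i = k then 1 else 0) * h l + (if i = l then 1 else 0) * h k := by
      rw [Finsupp.sum_apply]
      have : (h.sum fun j y => (y • dd (R := R) i j) (Sum.inr ⟨(k, l), hkl⟩)) =
          h.sum fun j y =>
            (if j = l then (if i = k then 1 else 0) * y else 0) +
              (if j = k then (if i = l then 1 else 0) * y else 0) := by
        apply Finsupp.sum_congr
        intro j _
        rw [Finsupp.smul_apply, dd_apply_inr i j k l hkl, smul_eq_mul]
        split_ifs <;> first | ring1 | tauto | (exfalso; subst_vars; simp at hkl)
      rw [this, Finsupp.sum_add, sum_proj, sum_proj]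
    simp only [Finsupp.add_apply, Finsupp.smul_apply, QF_apply, Qfun_inr, hsum,
      smul_eq_mul, Finsupp.single_apply]
    have hkl' : k ≠ l := ne_of_lt hkl
    rcases eq_or_ne i k with rfl | hik <;> rcases eq_or_ne i l with rfl | hil
    · exact absurd rfl hkl'
    · simp [hi, hil, Ne.symm hil] <;> try ring1
    · simp [hi, hik, Ne.symm hik] <;> try ring1
    · simp [hik, hil, Ne.symm hik, Ne.symm hil] <;> try ring1

lemma psi_QF (e : Module.Basis I R A) (f : I →₀ R) :
    psi e (QF f) = gammaGen R A (e.repr.symm f) := by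
  induction f using Finsupp.induction with
  | zero => simp
  | single_add i x h hix hx ih =>
    rw [QF_step i x h (Finsupp.notMem_support_iff.mp hix)]
    rw [map_add, map_add, map_smul, map_smul, ih, psi_single, map_finsuppSum (psi e)]
    have hvB : vB e (Sum.inl i) = gammaGen R A (e i) := rfl
    have hterm : (h.sum fun j y => psi e (y • dd i j)) =
        h.sum fun j y => y • bA (R := R) (e i) (e j) := by
      apply Finsupp.sum_congr
      intro j hj
      rw [map_smul, psi_dd e (fun hij : i = j => hix (hij ▸ hj))]
    rw [hterm, hvB]
    have hrepr : e.repr.symm (Finsupp.single i x + h) = x • e i + e.repr.symm h := by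
      rw [map_add]
      congr 1
      simp [Module.Basis.repr_symm_apply, Finsupp.linearCombination_single]
    rw [hrepr]
    have hsplit : gammaGen R A (x • e i + e.repr.symm h) =
        x ^ 2 • gammaGen R A (e i) + gammaGen R A (e.repr.symm h) +
          x • bA (R := R) (e i) (e.repr.symm h) := by
      rw [gamma_add, ← hG1 x (e i), bA_symm, bA_smul_right, bA_symm]
    rw [hsplit]
    have hbsum : bA (R := R) (e i) (e.repr.symm h) =
        h.sum fun j y => y • bA (R := R) (e i) (e j) := by
      have hh : e.repr.symm h = h.sum fun j y => y • e j := by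
        rw [Module.Basis.repr_symm_apply, Finsupp.linearCombination_apply]
      rw [show bA (R := R) (e i) (e.repr.symm h) = bAlin (e i) (e.repr.symm h) from rfl, hh,
        map_finsuppSum]
      simp
    rw [hbsum, one_smul]
    abel

noncomputable def phibar (e : Module.Basis I R A) : Gamma R A →ₗ[R] (B I →₀ R) :=
  Submodule.liftQ _ (phi e) (phi_rels e)

@[simp] lemma phibar_mk (e : Module.Basis I R A) (m : A →₀ R) :
    phibar e (Submodule.Quotient.mk m) = phi e m := rfl

lemma QF_basis_single (i : I) : QF (Finsupp.single i (1 : R)) = Finsupp.single (Sum.inl i) 1 := by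
  classical
  ext b
  rcases b with k | ⟨⟨k, l⟩, hkl⟩
  · simp only [QF_apply, Qfun_inl, Finsupp.single_apply, Sum.inl.injEq]
    split_ifs <;> ring1
  · have h2 : ¬(i = k ∧ i = l) := fun ⟨ha, hb⟩ => absurd (ha ▸ hb ▸ hkl) (lt_irrefl _)
    simp only [QF_apply, Qfun_inr, Finsupp.single_apply]
    split_ifs <;> first | ring1 | tauto | simp_all

lemma phibar_vB (e : Module.Basis I R A) (b : B I) :
    phibar e (vB e b) = Finsupp.single b 1 := by
  classical
  rcases b with i | ⟨⟨i, j⟩, hij⟩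
  · show phibar e (gammaGen R A (e i)) = _
    rw [gammaGen_def, phibar_mk, phi_single, one_smul, Module.Basis.repr_self, QF_basis_single]
  · show phibar e (gammaGen R A (e i + e j) - gammaGen R A (e i) - gammaGen R A (e j)) = _
    rw [map_sub, map_sub]
    simp only [gammaGen_def, map_sub, phibar_mk, phi_single, one_smul, Module.Basis.repr_self,
      map_add]
    have hij' : i ≠ j := ne_of_lt hij
    ext b
    rcases b with k | ⟨⟨k, l⟩, hkl⟩
    · have h4 : ¬(i = k ∧ j = k) := fun ⟨ha, hb⟩ => hij' (ha.trans hb.symm)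
      simp only [Finsupp.sub_apply, QF_apply, Qfun_inl, Finsupp.add_apply,
        Finsupp.single_apply, Sum.inl.injEq]
      split_ifs <;> first | ring1 | tauto | simp_all
    · replace hkl : k < l := hkl
      have hij2 : i < j := hij
      have h1 : ¬(j = k ∧ i = l) := by
        rintro ⟨rfl, rfl⟩
        exact lt_irrefl _ (lt_trans hij2 hkl)
      have h2 : ¬(i = k ∧ i = l) := fun ⟨ha, hb⟩ => absurd (ha ▸ hb ▸ hkl) (lt_irrefl _)
      have h3 : ¬(j = k ∧ j = l) := fun ⟨ha, hb⟩ => absurd (ha ▸ hb ▸ hkl) (lt_irrefl _)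
      simp only [Finsupp.sub_apply, QF_apply, Qfun_inr, Finsupp.add_apply,
        Finsupp.single_apply, Sum.inr.injEq, Subtype.mk.injEq, Prod.mk.injEq]
      split_ifs <;> first | ring1 | tauto | simp_all

lemma comp1 (e : Module.Basis I R A) : (phibar e).comp (psi e) = LinearMap.id := by
  apply Finsupp.lhom_ext
  intro b r
  simp only [LinearMap.comp_apply, LinearMap.id_apply, psi_single, map_smul, phibar_vB]
  rw [Finsupp.smul_single', mul_one]

lemma comp2 (e : Module.Basis I R A) : (psi e).comp (phibar e) = LinearMap.id := by
  apply Submodule.linearMap_qext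
  apply Finsupp.lhom_ext
  intro a r
  show psi e (phibar e (Submodule.Quotient.mk (Finsupp.single a r) : Gamma R A)) =
    (Submodule.Quotient.mk (Finsupp.single a r) : Gamma R A)
  rw [phibar_mk, phi_single, map_smul, psi_QF, LinearEquiv.symm_apply_apply,
    gamma_smul_gen, Finsupp.smul_single', mul_one]

end GammaAux

/-- If `A` is a free `R`-module with basis `{e_i}_{i ∈ I}` indexed by a well-ordered set
`I`, then `Γ(A)` is a free `R`-module with basis
`{γ(e_i)}_{i ∈ I} ∪ {γ(e_i + e_j) - γ(e_i) - γ(e_j)}_{i < j}`. -/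


theorem gamma_basis_of_free {I : Type*} [LinearOrder I] [IsWellOrder I (· < ·)]
    (e : Module.Basis I R A) :
    ∃ Bs : Module.Basis (I ⊕ {z : I × I // z.1 < z.2}) R (Gamma R A),
      (∀ i : I, Bs (Sum.inl i) = gammaGen R A (e i)) ∧
      (∀ z : {z : I × I // z.1 < z.2}, Bs (Sum.inr z) =
        gammaGen R A (e z.1.1 + e z.1.2) - gammaGen R A (e z.1.1) -
          gammaGen R A (e z.1.2)) := by
  classical
  refine ⟨Module.Basis.ofRepr (LinearEquiv.ofLinear (GammaAux.phibar e) (GammaAux.psi e)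
    (GammaAux.comp1 e) (GammaAux.comp2 e)), ?_, ?_⟩
  · intro i
    simp only [Module.Basis.coe_ofRepr, LinearEquiv.ofLinear_symm_apply, GammaAux.psi_single,
      one_smul]
    rfl
  · intro z
    simp only [Module.Basis.coe_ofRepr, LinearEquiv.ofLinear_symm_apply, GammaAux.psi_single,
      one_smul]
    rfl
end
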